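/- arXiv:2001.01262 — 4 statements merged into one kernel-verified Lean document; each statement's English description precedes it below -/
import Mathlib

section
/- Let a_k be nonnegative integers with gcd{k : a_k > 0} = 1, such that the radius of convergence of a(t) = Σ_{k≥1} a_k t^k equals 1, and let α ∈ (0,1) be the unique solution of a(α) = 1. Define b_0 = 1 and b_n = Σ_{k=1}^n a_k b_{n-k}. Then lim_{n→∞} b_n^{1/n} exists and equals 1/α. -/
/-!
Supermultiplicativity `b m * b n ≤ b (m + n)` and the gcd condition give `1 ≤ b n` for all large
`n`; hence `b n ≥ c ^ n / C` for some `C > 0` as soon as a single `b m` exceeds `c ^ m`. Such an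
`m` exists for every `c < 1 / α`: otherwise `∑ b n α ^ n` would converge, which the
generating-function identity `b(t) = 1 + a(t) b(t)` forbids at `a(α) = 1`. The upper bound
`b n * α ^ n ≤ 1` is an induction along the recursion.
-/

open Finset Filter Topology

theorem rpow_one_div_le_of_le_pow {x r : ℝ} {n : ℕ} (hx : 0 ≤ x) (hr : 0 ≤ r) (hn : n ≠ 0)
    (h : x ≤ r ^ n) : x ^ (1 / (n : ℝ)) ≤ r := by
  rw [one_div, Real.rpow_inv_le_iff_of_pos hx hr (by positivity), Real.rpow_natCast]
  exact h

theorem eventually_lt_rpow_one_div_of_pow_le_mul {x : ℕ → ℝ} {c C c' : ℝ} (hc : 0 < c)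
    (hC : 0 < C) (h : ∀ᶠ n in atTop, c ^ n ≤ C * x n) (hc' : c' < c) :
    ∀ᶠ n in atTop, c' < x n ^ (1 / (n : ℝ)) := by
  have hlim : Tendsto (fun n : ℕ => c * C⁻¹ ^ (1 / (n : ℝ))) atTop (𝓝 c) := by
    simpa using (tendsto_const_nhds.rpow tendsto_one_div_atTop_nhds_zero_nat
      (Or.inl (inv_pos.2 hC).ne')).const_mul c
  filter_upwards [hlim.eventually (eventually_gt_nhds hc'), h, eventually_ne_atTop 0]
    with n hlt hle hn
  have hx : 0 < x n := pos_of_mul_pos_right ((pow_pos hc n).trans_le hle) hC.le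
  refine hlt.trans_le ?_
  rw [one_div, Real.le_rpow_inv_iff_of_pos (by positivity) hx.le (by positivity),
    Real.mul_rpow hc.le (by positivity), Real.rpow_inv_rpow (inv_pos.2 hC).le (by positivity),
    Real.rpow_natCast, ← div_eq_mul_inv, div_le_iff₀ hC, mul_comm]
  exact hle

structure IsColoredCompositionCount (a b : ℕ → ℕ) : Prop where
  zero : b 0 = 1
  eq_sum : ∀ n, 1 ≤ n → b n = ∑ k ∈ Icc 1 n, a k * b (n - k)

namespace IsColoredCompositionCount

variable {a b : ℕ → ℕ}

theorem mul_le_add (h : IsColoredCompositionCount a b) (m n : ℕ) : b m * b n ≤ b (m + n) := by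
  induction m using Nat.strong_induction_on generalizing n with
  | _ m ih =>
    rcases Nat.eq_zero_or_pos m with rfl | hm
    · simp [h.zero]
    rw [h.eq_sum m hm, h.eq_sum (m + n) (by omega), sum_mul]
    calc ∑ k ∈ Icc 1 m, a k * b (m - k) * b n
        ≤ ∑ k ∈ Icc 1 m, a k * b (m + n - k) := by
          refine sum_le_sum fun k hk => ?_
          rw [mem_Icc] at hk
          rw [mul_assoc, show m + n - k = m - k + n by omega]
          exact Nat.mul_le_mul_left _ (ih (m - k) (by omega) n)
      _ ≤ ∑ k ∈ Icc 1 (m + n), a k * b (m + n - k) :=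
          sum_le_sum_of_subset (Icc_subset_Icc_right (by omega))

theorem pow_le (h : IsColoredCompositionCount a b) (q m : ℕ) : b m ^ q ≤ b (q * m) := by
  induction q with
  | zero => simp [h.zero]
  | succ q ih =>
    calc b m ^ (q + 1) = b m ^ q * b m := pow_succ _ _
      _ ≤ b (q * m) * b m := Nat.mul_le_mul_right _ ih
      _ ≤ b ((q + 1) * m) := by rw [add_mul, one_mul]; exact h.mul_le_add _ _

theorem weight_le (h : IsColoredCompositionCount a b) {k : ℕ} (hk : 1 ≤ k) : a k ≤ b k := by
  rw [h.eq_sum k hk]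
  simpa [h.zero] using
    single_le_sum (f := fun j => a j * b (k - j)) (fun _ _ => Nat.zero_le _)
      (mem_Icc.mpr ⟨hk, le_rfl⟩)

theorem one_le_of_mem_closure (h : IsColoredCompositionCount a b) {n : ℕ}
    (hn : n ∈ AddSubmonoid.closure {k | 0 < a k}) : 1 ≤ b n := by
  induction hn using AddSubmonoid.closure_induction with
  | mem k hk =>
    rcases Nat.eq_zero_or_pos k with rfl | hk0
    · exact h.zero.ge
    · exact le_trans hk (h.weight_le hk0)
  | zero => exact h.zero.ge
  | add m n _ _ hm hn =>
    exact le_trans (Nat.one_le_iff_ne_zero.2 (by positivity)) (h.mul_le_add m n)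

theorem exists_one_le_of_setGcd_eq_one (h : IsColoredCompositionCount a b)
    (hgcd : Nat.setGcd {k | 0 < a k} = 1) : ∃ N, ∀ n ≥ N, 1 ≤ b n := by
  obtain ⟨N, hN⟩ := Nat.exists_mem_closure_of_ge {k | 0 < a k}
  exact ⟨N, fun n hn => h.one_le_of_mem_closure (hN n hn (hgcd ▸ one_dvd n))⟩

theorem sum_antidiagonal (h : IsColoredCompositionCount a b) (ha0 : a 0 = 0) (n : ℕ) :
    ∑ p ∈ antidiagonal n, a p.1 * b p.2 = if n = 0 then 0 else b n := by
  rcases Nat.eq_zero_or_pos n with rfl | hn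
  · simp [ha0]
  rw [if_neg hn.ne', h.eq_sum n hn, Nat.sum_antidiagonal_eq_sum_range_succ (fun i j => a i * b j)]
  refine (sum_subset (fun k hk => ?_) (fun k hk hk' => ?_)).symm
  · rw [mem_Icc] at hk; rw [mem_range]; omega
  · rw [mem_range] at hk; rw [mem_Icc] at hk'
    simp [show k = 0 by omega, ha0]

theorem mul_pow_le_one (h : IsColoredCompositionCount a b) {α : ℝ} (hα : 0 ≤ α)
    (hA : Summable fun k => (a k : ℝ) * α ^ k) (hA1 : ∑' k, (a k : ℝ) * α ^ k ≤ 1) (n : ℕ) :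
    (b n : ℝ) * α ^ n ≤ 1 := by
  induction n using Nat.strong_induction_on with
  | _ n ih =>
    rcases Nat.eq_zero_or_pos n with rfl | hn
    · simp [h.zero]
    rw [h.eq_sum n hn]
    push_cast
    calc (∑ k ∈ Icc 1 n, (a k : ℝ) * b (n - k)) * α ^ n
        = ∑ k ∈ Icc 1 n, (a k : ℝ) * α ^ k * ((b (n - k) : ℝ) * α ^ (n - k)) := by
          rw [sum_mul]
          refine sum_congr rfl fun k hk => ?_
          rw [mem_Icc] at hk
          rw [← Nat.add_sub_of_le hk.2, pow_add, Nat.add_sub_cancel_left]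
          ring
      _ ≤ ∑ k ∈ Icc 1 n, (a k : ℝ) * α ^ k := by
          refine sum_le_sum fun k hk => ?_
          rw [mem_Icc] at hk
          exact mul_le_of_le_one_right (by positivity) (ih (n - k) (by omega))
      _ ≤ ∑' k, (a k : ℝ) * α ^ k := hA.sum_le_tsum _ fun k _ => by positivity
      _ ≤ 1 := hA1

theorem tsum_mul_tsum_eq (h : IsColoredCompositionCount a b) (ha0 : a 0 = 0) {t : ℝ}
    (hA : Summable fun k => (a k : ℝ) * t ^ k) (hB : Summable fun n => (b n : ℝ) * t ^ n) :
    (∑' k, (a k : ℝ) * t ^ k) * ∑' n, (b n : ℝ) * t ^ n = ∑' n, (b n : ℝ) * t ^ n - 1 := by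
  have hterm (n : ℕ) : ∑ p ∈ antidiagonal n, (a p.1 : ℝ) * t ^ p.1 * ((b p.2 : ℝ) * t ^ p.2) =
      (b n : ℝ) * t ^ n - if n = 0 then 1 else 0 := by
    have hp : ∀ p ∈ antidiagonal n, (a p.1 : ℝ) * t ^ p.1 * ((b p.2 : ℝ) * t ^ p.2) =
        ((a p.1 * b p.2 : ℕ) : ℝ) * t ^ n := by
      rintro ⟨i, j⟩ hij
      rw [HasAntidiagonal.mem_antidiagonal] at hij
      subst hij
      push_cast
      ring
    rw [sum_congr rfl hp, ← sum_mul, ← Nat.cast_sum, h.sum_antidiagonal ha0]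
    split_ifs with hn <;> simp [hn, h.zero]
  rw [tsum_mul_tsum_eq_tsum_sum_antidiagonal_of_summable_norm hA.norm hB.norm, tsum_congr hterm,
    hB.tsum_sub (hasSum_ite_eq 0 1).summable, tsum_ite_eq]

theorem not_summable_of_one_le_tsum (h : IsColoredCompositionCount a b) (ha0 : a 0 = 0)
    {t : ℝ} (ht : 0 ≤ t)
    (hA : Summable fun k => (a k : ℝ) * t ^ k) (hA1 : 1 ≤ ∑' k, (a k : ℝ) * t ^ k) :
    ¬ Summable fun n => (b n : ℝ) * t ^ n := by
  intro hB
  have hid := h.tsum_mul_tsum_eq ha0 hA hB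
  have hB0 : 0 ≤ ∑' n, (b n : ℝ) * t ^ n := tsum_nonneg fun n => by positivity
  nlinarith [mul_le_mul_of_nonneg_right hA1 hB0]

theorem exists_pow_lt (h : IsColoredCompositionCount a b) (ha0 : a 0 = 0) {t : ℝ} (ht : 0 ≤ t)
    (hA : Summable fun k => (a k : ℝ) * t ^ k) (hA1 : 1 ≤ ∑' k, (a k : ℝ) * t ^ k)
    {c : ℝ} (hc : 0 ≤ c) (hct : c * t < 1) : ∃ m, 1 ≤ m ∧ c ^ m < b m := by
  by_contra! hle
  refine h.not_summable_of_one_le_tsum ha0 ht hA hA1 (.of_nonneg_of_le (fun n => by positivity)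
    (fun n => ?_) (summable_geometric_of_lt_one (by positivity) hct))
  rcases Nat.eq_zero_or_pos n with rfl | hn
  · simp [h.zero]
  · rw [mul_pow]
    exact mul_le_mul_of_nonneg_right (hle n hn) (by positivity)

theorem pow_le_mul (h : IsColoredCompositionCount a b) {N m : ℕ} (hN : ∀ n ≥ N, 1 ≤ b n)
    {c : ℝ} (hc : 1 ≤ c) (hm : 1 ≤ m) (hcm : c ^ m ≤ b m) {n : ℕ} (hn : N ≤ n) :
    c ^ n ≤ c ^ (N + m) * b n := by
  obtain ⟨q, s, rfl, hNs, hs⟩ : ∃ q s, n = q * m + s ∧ N ≤ s ∧ s ≤ N + m := by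
    refine ⟨(n - N) / m, N + (n - N) % m, ?_, by omega, ?_⟩
    · have := Nat.div_add_mod' (n - N) m
      omega
    · have := Nat.mod_lt (n - N) hm
      omega
  have hbq : (b m : ℝ) ^ q ≤ b (q * m + s) := by
    exact_mod_cast (h.pow_le q m).trans
      ((Nat.le_mul_of_pos_right _ (hN s hNs)).trans (h.mul_le_add _ _))
  calc c ^ (q * m + s) = (c ^ m) ^ q * c ^ s := by rw [pow_add, pow_mul']
    _ ≤ (b m : ℝ) ^ q * c ^ (N + m) :=
        mul_le_mul (pow_le_pow_left₀ (by positivity) hcm q) (pow_le_pow_right₀ hc hs)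
          (by positivity) (by positivity)
    _ ≤ b (q * m + s) * c ^ (N + m) := mul_le_mul_of_nonneg_right hbq (by positivity)
    _ = c ^ (N + m) * b (q * m + s) := mul_comm _ _

theorem eventually_lt_rpow_one_div (h : IsColoredCompositionCount a b) (ha0 : a 0 = 0)
    (hgcd : Nat.setGcd {k | 0 < a k} = 1) {t : ℝ} (ht0 : 0 < t) (ht1 : t < 1)
    (hA : Summable fun k => (a k : ℝ) * t ^ k) (hA1 : 1 ≤ ∑' k, (a k : ℝ) * t ^ k)
    {c : ℝ} (hct : c * t < 1) : ∀ᶠ n in atTop, c < (b n : ℝ) ^ (1 / (n : ℝ)) := by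
  obtain ⟨c₁, hcc₁, hc₁t⟩ : ∃ c₁, max c 1 < c₁ ∧ c₁ < 1 / t :=
    exists_between (max_lt ((lt_div_iff₀ ht0).2 (by simpa using hct))
      (by rwa [lt_div_iff₀ ht0, one_mul]))
  have hc₁ : 1 < c₁ := (le_max_right c 1).trans_lt hcc₁
  obtain ⟨m, hm, hcm⟩ := h.exists_pow_lt ha0 ht0.le hA hA1 (by positivity)
    ((lt_div_iff₀ ht0).1 hc₁t)
  obtain ⟨N, hN⟩ := h.exists_one_le_of_setGcd_eq_one hgcd
  exact eventually_lt_rpow_one_div_of_pow_le_mul (by positivity) (by positivity)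
    (eventually_atTop.2 ⟨N, fun n hn => h.pow_le_mul hN hc₁.le hm hcm.le hn⟩)
    ((le_max_left c 1).trans_lt hcc₁)

end IsColoredCompositionCount

theorem stmt5_general (a : ℕ → ℕ) (ha0 : a 0 = 0)
    (hgcd : ∀ d : ℕ, (∀ k, 0 < a k → d ∣ k) → d = 1)
    (α : ℝ) (hα : α ∈ Set.Ioo (0 : ℝ) 1) (hα1 : ∑' k, (a k : ℝ) * α ^ k = 1)
    (b : ℕ → ℕ) (hb0 : b 0 = 1)
    (hb : ∀ n, 1 ≤ n → b n = ∑ k ∈ Finset.Icc 1 n, a k * b (n - k)) :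
    Filter.Tendsto (fun n : ℕ => (b n : ℝ) ^ (1 / (n : ℝ))) Filter.atTop (nhds (1 / α)) := by
  have h : IsColoredCompositionCount a b := ⟨hb0, hb⟩
  have hA : Summable fun k => (a k : ℝ) * α ^ k := by
    by_contra hA
    simp [tsum_eq_zero_of_not_summable hA] at hα1
  have hsetGcd : Nat.setGcd {k | 0 < a k} = 1 := hgcd _ fun k hk => Nat.setGcd_dvd_of_mem hk
  refine tendsto_order.2 ⟨fun c hc => ?_, fun c hc => ?_⟩
  · exact h.eventually_lt_rpow_one_div ha0 hsetGcd hα.1 hα.2 hA hα1.ge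
      ((lt_div_iff₀ hα.1).1 hc)
  · filter_upwards [eventually_ne_atTop 0] with n hn
    refine (rpow_one_div_le_of_le_pow (Nat.cast_nonneg _) (one_div_pos.2 hα.1).le hn ?_).trans_lt hc
    rw [div_pow, one_pow, le_div_iff₀ (pow_pos hα.1 n)]
    exact h.mul_pow_le_one hα.1.le hA hα1.le n

theorem stmt5 (a : ℕ → ℕ) (ha0 : a 0 = 0)
    (hgcd : ∀ d : ℕ, (∀ k, 0 < a k → d ∣ k) → d = 1)
    (hrad1 : ∀ t : ℝ, 0 ≤ t → t < 1 → Summable fun k => (a k : ℝ) * t ^ k)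
    (hrad2 : ∀ t : ℝ, 1 < t → ¬ Summable fun k => (a k : ℝ) * t ^ k)
    (α : ℝ) (hα : α ∈ Set.Ioo (0 : ℝ) 1) (hα1 : ∑' k, (a k : ℝ) * α ^ k = 1)
    (b : ℕ → ℕ) (hb0 : b 0 = 1)
    (hb : ∀ n, 1 ≤ n → b n = ∑ k ∈ Finset.Icc 1 n, a k * b (n - k)) :
    Filter.Tendsto (fun n : ℕ => (b n : ℝ) ^ (1 / (n : ℝ))) Filter.atTop (nhds (1 / α)) :=
  stmt5_general a ha0 hgcd α hα hα1 b hb0 hb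
end

section
/- Let b_n denote the number of ways to write n as an ordered sum of perfect squares (compositions of n into parts from {1, 4, 9, 16, ...}). Then lim_{n→∞} b_n^{1/n} exists and equals 1/α, where α ∈ (0,1) is the unique positive solution of Σ_{m≥1} t^{m²} = 1. -/
/-!
The sequence is supermultiplicative (concatenate compositions), so by Fekete's lemma
`b n ^ (1 / n)` tends to some `L` with `b n ≤ L ^ n` for all `n`. The recurrence gives
`α ^ n * b n ≤ ∑ m ≥ 1, α ^ (m ^ 2) = 1` by induction, hence `L ≤ 1 / α`. Conversely, in `ℝ≥0∞`
the generating function `B t = ∑ b n * t ^ n` satisfies `B = 1 + F * B` with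
`F t = ∑ m ≥ 1, t ^ (m ^ 2)`; since `F α = 1` this forces `B α = ∞`, which rules out `L * α < 1`.
-/

open Finset Filter Topology
open scoped ENNReal

def IsSquareCompositionCount (b : ℕ → ℕ) : Prop :=
  ∀ n, b n = (if n = 0 then 1 else 0) +
    ∑ m ∈ range n, if (m + 1) ^ 2 ≤ n then b (n - (m + 1) ^ 2) else 0

theorem isSquareCompositionCount_of_rec {b : ℕ → ℕ} (hb0 : b 0 = 1)
    (hb : ∀ n, 1 ≤ n → b n = ∑ m ∈ Icc 1 n, if m ^ 2 ≤ n then b (n - m ^ 2) else 0) :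
    IsSquareCompositionCount b := by
  rintro (_ | n)
  · simp [hb0]
  · rw [hb _ n.succ_pos, if_neg n.succ_ne_zero, zero_add, range_eq_Ico,
      sum_Ico_add' (fun m => if m ^ 2 ≤ n + 1 then b (n + 1 - m ^ 2) else 0), zero_add,
      Ico_add_one_right_eq_Icc]

namespace IsSquareCompositionCount

variable {b : ℕ → ℕ} (hb : IsSquareCompositionCount b)
include hb

theorem zero : b 0 = 1 := by simpa using hb 0

theorem one : b 1 = 1 := by simpa [hb.zero] using hb 1

theorem mul_le_add (m n : ℕ) : b m * b n ≤ b (m + n) := by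
  induction n using Nat.strong_induction_on with
  | _ n ih =>
    rcases n.eq_zero_or_pos with rfl | hn
    · simp [hb.zero]
    rw [hb n, hb (m + n), if_neg hn.ne', if_neg (by omega), zero_add, zero_add, mul_sum]
    refine (sum_le_sum fun k _ => ?_).trans
      (sum_le_sum_of_subset (range_subset_range.2 (Nat.le_add_left n m)))
    split_ifs with h h'
    · rw [show m + n - (k + 1) ^ 2 = m + (n - (k + 1) ^ 2) by omega]
      exact ih _ (Nat.sub_lt hn (by positivity))
    · omega
    · simp
    · simp

theorem one_le (n : ℕ) : 1 ≤ b n := by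
  induction n with
  | zero => exact hb.zero.ge
  | succ n ih =>
    have h := hb.mul_le_add n 1
    rw [hb.one, mul_one] at h
    exact ih.trans h

theorem pow_mul_le_one {α : ℝ} (hα : 0 ≤ α) (hs : Summable fun m : ℕ => α ^ ((m + 1) ^ 2))
    (hle : ∑' m : ℕ, α ^ ((m + 1) ^ 2) ≤ 1) (n : ℕ) : α ^ n * b n ≤ 1 := by
  induction n using Nat.strong_induction_on with
  | _ n ih =>
    rcases n.eq_zero_or_pos with rfl | hn
    · simp [hb.zero]
    rw [hb n, if_neg hn.ne', zero_add]
    push_cast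
    calc α ^ n * ∑ m ∈ range n, (if (m + 1) ^ 2 ≤ n then (b (n - (m + 1) ^ 2) : ℝ) else 0)
        ≤ ∑ m ∈ range n, α ^ ((m + 1) ^ 2) := by
          rw [mul_sum]
          refine sum_le_sum fun m _ => ?_
          split_ifs with h
          · calc α ^ n * b (n - (m + 1) ^ 2)
                = α ^ ((m + 1) ^ 2) * (α ^ (n - (m + 1) ^ 2) * b (n - (m + 1) ^ 2)) := by
                  rw [← mul_assoc, ← pow_add, Nat.add_sub_cancel' h]
              _ ≤ α ^ ((m + 1) ^ 2) :=
                  mul_le_of_le_one_right (by positivity) (ih _ (Nat.sub_lt hn (by positivity)))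
          · simp only [mul_zero]; positivity
      _ ≤ 1 := (hs.sum_le_tsum _ fun m _ => by positivity).trans hle

theorem tsum_mul_pow (t : ℝ≥0∞) :
    ∑' n, (b n : ℝ≥0∞) * t ^ n =
      1 + (∑' m : ℕ, t ^ ((m + 1) ^ 2)) * ∑' n, (b n : ℝ≥0∞) * t ^ n := by
  -- `c m n` collects the compositions of `n` whose first part is `(m + 1) ^ 2`
  set c : ℕ → ℕ → ℝ≥0∞ := fun m n =>
    if (m + 1) ^ 2 ≤ n then (b (n - (m + 1) ^ 2) : ℝ≥0∞) * t ^ n else 0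
  have hshift (m : ℕ) : ∑' n, c m n = t ^ ((m + 1) ^ 2) * ∑' n, (b n : ℝ≥0∞) * t ^ n := by
    rw [← (add_left_injective ((m + 1) ^ 2)).tsum_eq, ← ENNReal.tsum_mul_left]
    · refine tsum_congr fun k => ?_
      simp only [c, le_add_self, if_true, Nat.add_sub_cancel, pow_add]
      ring
    · intro n hn
      simp only [c, Function.mem_support, ne_eq, ite_eq_right_iff, not_forall] at hn
      exact ⟨n - (m + 1) ^ 2, Nat.sub_add_cancel hn.1⟩
  have hrow (n : ℕ) : (b n : ℝ≥0∞) * t ^ n = (if n = 0 then 1 else 0) + ∑' m, c m n := by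
    rw [tsum_eq_sum (s := range n)]
    · conv_lhs => rw [hb n]
      push_cast
      simp only [add_mul, sum_mul, c, ite_mul, zero_mul]
      split_ifs <;> simp_all
    · intro m hm
      simp only [mem_range, not_lt] at hm
      simp only [c]
      rw [if_neg]
      nlinarith
  conv_lhs => rw [tsum_congr hrow, ENNReal.tsum_add, tsum_ite_eq, ENNReal.tsum_comm,
    tsum_congr hshift, ENNReal.tsum_mul_right]

theorem tsum_mul_pow_eq_top {t : ℝ≥0∞} (ht : 1 ≤ ∑' m : ℕ, t ^ ((m + 1) ^ 2)) :
    ∑' n, (b n : ℝ≥0∞) * t ^ n = ⊤ := by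
  by_contra hG
  refine (ENNReal.lt_add_right hG one_ne_zero).not_ge ?_
  calc ∑' n, (b n : ℝ≥0∞) * t ^ n + 1
      ≤ 1 + (∑' m : ℕ, t ^ ((m + 1) ^ 2)) * ∑' n, (b n : ℝ≥0∞) * t ^ n := by
        rw [add_comm]; gcongr; exact le_mul_of_one_le_left' ht
    _ = ∑' n, (b n : ℝ≥0∞) * t ^ n := (hb.tsum_mul_pow t).symm

theorem inv_le_of_le_pow {α L : ℝ} (hα : 0 < α) (hs : Summable fun m : ℕ => α ^ ((m + 1) ^ 2))
    (h1 : 1 ≤ ∑' m : ℕ, α ^ ((m + 1) ^ 2)) (hL : ∀ n, (b n : ℝ) ≤ L ^ n) : 1 / α ≤ L := by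
  by_contra! hlt
  have hr0 : 0 ≤ L * α := mul_nonneg ((Nat.cast_nonneg _).trans (by simpa using hL 1)) hα.le
  have hr1 : L * α < 1 := by rwa [lt_div_iff₀ hα] at hlt
  have hone : 1 ≤ ∑' m : ℕ, ENNReal.ofReal α ^ ((m + 1) ^ 2) := by
    simp_rw [← ENNReal.ofReal_pow hα.le, ← ENNReal.ofReal_tsum_of_nonneg (fun m => by positivity) hs]
    simpa using ENNReal.ofReal_le_ofReal h1
  refine (hb.tsum_mul_pow_eq_top hone).not_lt ?_
  calc ∑' n, (b n : ℝ≥0∞) * ENNReal.ofReal α ^ n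
      ≤ ∑' n, ENNReal.ofReal (L * α) ^ n := ENNReal.tsum_le_tsum fun n => by
        rw [← ENNReal.ofReal_natCast, ← ENNReal.ofReal_pow hα.le,
          ← ENNReal.ofReal_mul (by positivity), ← ENNReal.ofReal_pow hr0, mul_pow]
        exact ENNReal.ofReal_le_ofReal (mul_le_mul_of_nonneg_right (hL n) (by positivity))
    _ < ⊤ := by
        rw [ENNReal.tsum_geometric, ENNReal.inv_lt_top, tsub_pos_iff_lt, ENNReal.ofReal_lt_one]
        exact hr1

end IsSquareCompositionCount

theorem exists_tendsto_rpow_of_supermultiplicative {b : ℕ → ℝ} (hpos : ∀ n, 0 < b n)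
    (hmul : ∀ m n, b m * b n ≤ b (m + n)) {C : ℝ} (hC : ∀ n, b n ≤ C ^ n) :
    ∃ L, Tendsto (fun n : ℕ => b n ^ (1 / (n : ℝ))) atTop (𝓝 L) ∧ ∀ n, b n ≤ L ^ n := by
  set u : ℕ → ℝ := fun n => -Real.log (b n)
  have hsub : Subadditive u := fun m n => by
    have h := Real.log_le_log (mul_pos (hpos m) (hpos n)) (hmul m n)
    rw [Real.log_mul (hpos m).ne' (hpos n).ne'] at h
    simp only [u]
    linarith
  have hbdd : BddBelow (Set.range fun n => u n / n) := by
    refine ⟨-|Real.log C|, Set.forall_mem_range.2 fun n => ?_⟩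
    rcases n.eq_zero_or_pos with rfl | hn
    · simp
    have h := Real.log_le_log (hpos n) (hC n)
    rw [Real.log_pow] at h
    have habs := mul_le_mul_of_nonneg_left (le_abs_self (Real.log C)) (Nat.cast_nonneg' n)
    rw [le_div_iff₀ (by positivity)]
    simp only [u]
    linarith
  refine ⟨Real.exp (-hsub.lim), ?_, fun n => ?_⟩
  · refine ((Real.continuous_exp.tendsto _).comp (hsub.tendsto_lim hbdd).neg).congr fun n => ?_
    simp only [Function.comp_apply, u, Real.rpow_def_of_pos (hpos n)]
    ring_nf
  rcases n.eq_zero_or_pos with rfl | hn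
  · simpa using le_of_mul_le_mul_right (by simpa using hmul 0 0) (hpos 0)
  have h := hsub.lim_le_div hbdd hn.ne'
  rw [le_div_iff₀ (by positivity)] at h
  calc b n = Real.exp (Real.log (b n)) := (Real.exp_log (hpos n)).symm
    _ ≤ Real.exp (-hsub.lim) ^ n := by
        rw [← Real.exp_nat_mul]
        exact Real.exp_le_exp.2 (by simp only [u] at h; linarith)

theorem stmt10 (b : ℕ → ℕ) (hb0 : b 0 = 1)
    (hb : ∀ n, 1 ≤ n → b n = ∑ m ∈ Finset.Icc 1 n, if m ^ 2 ≤ n then b (n - m ^ 2) else 0)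
    (α : ℝ) (hα : α ∈ Set.Ioo (0 : ℝ) 1) (hα1 : ∑' m : ℕ, α ^ ((m + 1) ^ 2) = 1) :
    Filter.Tendsto (fun n : ℕ => (b n : ℝ) ^ (1 / (n : ℝ))) Filter.atTop (nhds (1 / α)) := by
  have hrec := isSquareCompositionCount_of_rec hb0 hb
  have hα0 : 0 < α := hα.1
  have hs : Summable fun m : ℕ => α ^ ((m + 1) ^ 2) := by
    -- a non-summable series has `tsum` equal to `0`
    by_contra h
    exact zero_ne_one (tsum_eq_zero_of_not_summable h ▸ hα1)
  have hbα (n : ℕ) : (b n : ℝ) ≤ (1 / α) ^ n := by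
    rw [div_pow, one_pow, le_div_iff₀ (by positivity), mul_comm]
    exact hrec.pow_mul_le_one hα0.le hs hα1.le n
  obtain ⟨L, hL, hbL⟩ := exists_tendsto_rpow_of_supermultiplicative
    (fun n => by exact_mod_cast hrec.one_le n) (fun m n => by exact_mod_cast hrec.mul_le_add m n) hbα
  have hLα : L ≤ 1 / α := le_of_tendsto hL <| (eventually_ge_atTop 1).mono fun n hn => by
    rw [one_div (n : ℝ), Real.rpow_inv_le_iff_of_pos (by positivity) (by positivity) (by positivity),
      Real.rpow_natCast]
    exact hbα n
  rwa [le_antisymm hLα (hrec.inv_le_of_le_pow hα0 hs hα1.ge hbL)] at hL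
end

section
/- For any fixed integer d ≥ 2, let b_n be the number of compositions of n into parts of the form (d−1)m² + 1 with m ≥ 1 (each part of each size having one color). Then lim_{n→∞} b_n^{1/n} exists and equals 1/α, where α is the unique solution in (0,1) of Σ_{m≥1} t^{(d−1)m²+1} = 1. -/
/-!
The upper bound `b n * α ^ n ≤ 1` follows by induction from the recurrence, because the weights
`α ^ ((d - 1) * m ^ 2 + 1)` of the parts sum to `1`.

For the lower bound, concatenating compositions makes `b` supermultiplicative, and `b` is
eventually positive because the parts `d` and `(d - 1) * d ^ 2 + 1` are coprime (Frobenius).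
For `α < γ` the part weights `γ ^ ((d - 1) * m ^ 2 + 1)` sum to more than `1`, so the renewal
inequality `T ≥ 1 + (∑ weights) * T` rules out convergence of `T = ∑ b n * γ ^ n`. Hence
`b m ≥ c ^ m` for some `m` whenever `c * γ < 1`, and supermultiplicativity upgrades this to
`b n ≥ C * c ^ n` for all large `n`.
-/

open Finset Filter Topology

theorem HasSum.ite_le_sub {G : Type*} [AddCommGroup G] [TopologicalSpace G]
    [IsTopologicalAddGroup G] {f : ℕ → G} {a : G} (hf : HasSum f a) (k : ℕ) :
    HasSum (fun n => if k ≤ n then f (n - k) else 0) a := by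
  have hhead : ∑ i ∈ range k, (if k ≤ i then f (i - k) else 0) = 0 :=
    sum_eq_zero fun i hi => if_neg (not_le.2 (mem_range.1 hi))
  exact (hasSum_nat_add_iff' k).1 (by simpa [hhead] using hf)

theorem rpow_one_div_natCast_pow {x : ℝ} (hx : 0 ≤ x) {n : ℕ} (hn : n ≠ 0) :
    (x ^ n) ^ (1 / (n : ℝ)) = x := by
  rw [one_div, Real.pow_rpow_inv_natCast hx hn]

theorem tendsto_rpow_one_div_of_le_pow {a : ℕ → ℝ} {L : ℝ} (ha : ∀ n, 0 ≤ a n)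
    (hup : ∀ n, a n ≤ L ^ n) (hlow : ∀ᶠ c in 𝓝[<] L, ∃ C > 0, ∀ᶠ n in atTop, C * c ^ n ≤ a n) :
    Tendsto (fun n : ℕ => a n ^ (1 / (n : ℝ))) atTop (𝓝 L) := by
  have hL : 0 ≤ L := by simpa using (ha 1).trans (hup 1)
  refine tendsto_order.2 ⟨fun x hx => ?_, fun x hx => ?_⟩
  · rcases lt_or_ge x 0 with hx0 | hx0
    · exact Eventually.of_forall fun n => hx0.trans_le (Real.rpow_nonneg (ha n) _)
    obtain ⟨c, ⟨C, hC, hCc⟩, hxc, -⟩ := (hlow.and (Ioo_mem_nhdsLT hx)).exists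
    have hroot : Tendsto (fun n : ℕ => C ^ (1 / (n : ℝ)) * c) atTop (𝓝 c) := by
      simpa using ((tendsto_const_nhds (x := C)).rpow tendsto_one_div_atTop_nhds_zero_nat
        (Or.inl hC.ne')).mul_const c
    filter_upwards [hroot.eventually (lt_mem_nhds hxc), hCc, eventually_ge_atTop 1]
      with n hxn hn hn1
    have hc : 0 < c := hx0.trans_lt hxc
    calc x < C ^ (1 / (n : ℝ)) * c := hxn
      _ = (C * c ^ n) ^ (1 / (n : ℝ)) := by
        rw [Real.mul_rpow hC.le (by positivity), rpow_one_div_natCast_pow hc.le (by omega)]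
      _ ≤ a n ^ (1 / (n : ℝ)) := by gcongr
  · filter_upwards [eventually_ge_atTop 1] with n hn
    calc a n ^ (1 / (n : ℝ)) ≤ (L ^ n) ^ (1 / (n : ℝ)) := by gcongr; exacts [ha n, hup n]
      _ = L := rpow_one_div_natCast_pow hL (by omega)
      _ < x := hx

theorem exists_one_lt_sum_range_pow {p : ℕ → ℕ} (hp : p 1 ≠ 0) {α γ : ℝ} (hα : 0 ≤ α)
    (hαγ : α < γ) (hG : HasSum (fun m => α ^ p (m + 1)) 1) :
    ∃ N, 1 < ∑ m ∈ range N, γ ^ p (m + 1) := by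
  have hδ : 0 < γ ^ p 1 - α ^ p 1 := sub_pos.2 (pow_lt_pow_left₀ hαγ hα hp)
  obtain ⟨N, hN, hN1⟩ := ((hG.tendsto_sum_nat.eventually
    (lt_mem_nhds (sub_lt_self 1 hδ))).and (eventually_ge_atTop 1)).exists
  refine ⟨N, ?_⟩
  have hgap : γ ^ p 1 - α ^ p 1 ≤ ∑ m ∈ range N, (γ ^ p (m + 1) - α ^ p (m + 1)) :=
    single_le_sum (f := fun m => γ ^ p (m + 1) - α ^ p (m + 1))
      (fun m _ => sub_nonneg.2 (pow_le_pow_left₀ hα hαγ.le _)) (mem_range.2 hN1)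
  rw [sum_sub_distrib] at hgap
  linarith

-- The sum stops at `m = n`, which loses no part of size `≤ n` as soon as `m < p m`.
structure IsCompositionCount (p b : ℕ → ℕ) : Prop where
  zero : b 0 = 1
  eq_sum : ∀ n, 1 ≤ n → b n = ∑ m ∈ Icc 1 n, if p m ≤ n then b (n - p m) else 0

namespace IsCompositionCount

variable {p b : ℕ → ℕ}

theorem eq_sum_range (h : IsCompositionCount p b) {n : ℕ} (hn : 1 ≤ n) :
    b n = ∑ m ∈ range n, if p (m + 1) ≤ n then b (n - p (m + 1)) else 0 := by
  rw [h.eq_sum n hn, ← Finset.Ico_add_one_right_eq_Icc, sum_Ico_eq_sum_range]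
  simp only [add_tsub_cancel_right, add_comm 1]

theorem sum_range_le (h : IsCompositionCount p b) (hp : ∀ m, m < p m) (n N : ℕ) :
    ∑ m ∈ range N, (if p (m + 1) ≤ n then b (n - p (m + 1)) else 0) ≤ b n := by
  rcases Nat.eq_zero_or_pos n with rfl | hn
  · simp [h.zero, fun m => ((Nat.zero_le _).trans_lt (hp (m + 1))).ne']
  rw [h.eq_sum_range hn, ← sum_filter, ← sum_filter]
  refine sum_le_sum_of_subset fun m hm => ?_
  simp only [mem_filter, mem_range] at hm ⊢
  exact ⟨by linarith [hp (m + 1)], hm.2⟩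

theorem mul_le_add (h : IsCompositionCount p b) (hp : ∀ m, m < p m) (k n : ℕ) :
    b k * b n ≤ b (k + n) := by
  induction n using Nat.strong_induction_on with
  | _ n ih =>
  rcases Nat.eq_zero_or_pos n with rfl | hn
  · simp [h.zero]
  rw [h.eq_sum_range hn, mul_sum]
  refine le_trans (sum_le_sum fun m _ => ?_) (h.sum_range_le hp (k + n) n)
  by_cases h₁ : p (m + 1) ≤ n
  · rw [if_pos h₁, if_pos (by omega), Nat.add_sub_assoc h₁]
    exact ih _ (Nat.sub_lt hn ((Nat.zero_le _).trans_lt (hp _)))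
  · simp [h₁]

theorem pow_mul_le (h : IsCompositionCount p b) (hp : ∀ m, m < p m) (k q r : ℕ) :
    b k ^ q * b r ≤ b (k * q + r) := by
  induction q with
  | zero => simp
  | succ q ih =>
    calc b k ^ (q + 1) * b r = b k * (b k ^ q * b r) := by ring
      _ ≤ b k * b (k * q + r) := Nat.mul_le_mul_left _ ih
      _ ≤ b (k + (k * q + r)) := h.mul_le_add hp _ _
      _ = b (k * (q + 1) + r) := by ring_nf

theorem pos_of_mem_closure (h : IsCompositionCount p b) (hp : ∀ m, m < p m) {n : ℕ}
    (hn : n ∈ AddSubmonoid.closure (Set.range fun m => p (m + 1))) : 0 < b n := by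
  induction hn using AddSubmonoid.closure_induction with
  | mem _ hx =>
    obtain ⟨m, rfl⟩ := hx
    have hterm := single_le_sum (f := fun j => if p (j + 1) ≤ p (m + 1) then
      b (p (m + 1) - p (j + 1)) else 0) (fun _ _ => Nat.zero_le _) (mem_range.2 (lt_add_one m))
    simp only [le_refl, if_true, Nat.sub_self, h.zero] at hterm
    exact hterm.trans (h.sum_range_le hp _ _)
  | zero => simp [h.zero]
  | add x y _ _ hx hy => exact (Nat.mul_pos hx hy).trans_le (h.mul_le_add hp x y)

theorem mul_pow_le_one (h : IsCompositionCount p b) (hp : ∀ m, m < p m) {γ : ℝ} (hγ : 0 ≤ γ)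
    (hG : ∀ N, ∑ m ∈ range N, γ ^ p (m + 1) ≤ 1) (n : ℕ) : b n * γ ^ n ≤ 1 := by
  induction n using Nat.strong_induction_on with
  | _ n ih =>
  rcases Nat.eq_zero_or_pos n with rfl | hn
  · simp [h.zero]
  rw [h.eq_sum_range hn]
  push_cast
  rw [sum_mul]
  refine le_trans (sum_le_sum fun m _ => ?_) (hG n)
  split_ifs with hm
  · calc (b (n - p (m + 1)) : ℝ) * γ ^ n
          = b (n - p (m + 1)) * γ ^ (n - p (m + 1)) * γ ^ p (m + 1) := by
            rw [mul_assoc, ← pow_add, Nat.sub_add_cancel hm]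
      _ ≤ 1 * γ ^ p (m + 1) := by
            gcongr
            exact ih _ (Nat.sub_lt hn ((Nat.zero_le _).trans_lt (hp _)))
      _ = γ ^ p (m + 1) := one_mul _
  · simp only [zero_mul]; positivity

theorem sum_range_mul_pow_le (h : IsCompositionCount p b) (hp : ∀ m, m < p m) {γ : ℝ}
    (hγ : 0 ≤ γ) (n N : ℕ) :
    ∑ m ∈ range N, (if p (m + 1) ≤ n then
      γ ^ p (m + 1) * (b (n - p (m + 1)) * γ ^ (n - p (m + 1))) else 0) ≤ b n * γ ^ n := by
  have hsum := h.sum_range_le hp n N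
  calc _ = ∑ m ∈ range N, ((if p (m + 1) ≤ n then b (n - p (m + 1)) else 0 : ℕ) : ℝ) * γ ^ n := by
        refine sum_congr rfl fun m _ => ?_
        split_ifs with hm
        · rw [mul_left_comm, ← pow_add, Nat.add_sub_cancel' hm]
        · simp
    _ ≤ b n * γ ^ n := by
        rw [← sum_mul]
        gcongr
        exact_mod_cast hsum

theorem not_summable_mul_pow (h : IsCompositionCount p b) (hp : ∀ m, m < p m) {γ : ℝ}
    (hγ : 0 ≤ γ) {N : ℕ} (hS : 1 < ∑ m ∈ range N, γ ^ p (m + 1)) :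
    ¬ Summable fun n => (b n : ℝ) * γ ^ n := by
  intro hu
  set T := ∑' n, (b n : ℝ) * γ ^ n
  have hT : 1 ≤ T := by
    simpa [h.zero] using hu.le_tsum 0 fun n _ => by positivity
  -- renewal inequality: a composition is empty or ends with a part `p (m + 1)`
  have hrenewal : 1 + (∑ m ∈ range N, γ ^ p (m + 1)) * T ≤ T := by
    rw [sum_mul]
    refine hasSum_le (fun n => ?_) ((hasSum_ite_eq 0 1).add
      (hasSum_sum fun m _ => (hu.hasSum.mul_left (γ ^ p (m + 1))).ite_le_sub (p (m + 1))))
      hu.hasSum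
    rcases Nat.eq_zero_or_pos n with rfl | hn
    · simp [h.zero, fun m => ((Nat.zero_le _).trans_lt (hp (m + 1))).ne']
    · simpa [hn.ne'] using h.sum_range_mul_pow_le hp hγ n N
  nlinarith

theorem exists_pow_le (h : IsCompositionCount p b) (hp : ∀ m, m < p m) {c γ : ℝ}
    (hγ : 0 ≤ γ) (hcγ : c * γ < 1) {N : ℕ} (hS : 1 < ∑ m ∈ range N, γ ^ p (m + 1)) :
    ∃ m, 1 ≤ m ∧ c ^ m ≤ b m := by
  by_contra! hlt
  have hc : 0 < c := by simpa using (Nat.cast_nonneg (b 1)).trans_lt (hlt 1 le_rfl)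
  refine h.not_summable_mul_pow hp hγ hS (Summable.of_nonneg_of_le (fun n => by positivity)
    (fun n => ?_) (summable_geometric_of_lt_one (by positivity) hcγ))
  rcases Nat.eq_zero_or_pos n with rfl | hn
  · simp [h.zero]
  · rw [mul_pow]
    exact mul_le_mul_of_nonneg_right (hlt n hn).le (by positivity)

theorem exists_const_mul_pow_le (h : IsCompositionCount p b) (hp : ∀ m, m < p m) {c : ℝ}
    (hc : 1 ≤ c) {m : ℕ} (hm : 1 ≤ m) (hbm : c ^ m ≤ b m) (hpos : ∀ᶠ n in atTop, 0 < b n) :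
    ∃ C > 0, ∀ᶠ n in atTop, C * c ^ n ≤ b n := by
  obtain ⟨n₀, hn₀⟩ := eventually_atTop.1 hpos
  refine ⟨(c ^ (n₀ + m))⁻¹, by positivity, eventually_atTop.2 ⟨n₀, fun n hn => ?_⟩⟩
  obtain ⟨q, r, hr₀, hr, hdecomp⟩ : ∃ q r, n₀ ≤ r ∧ r ≤ n₀ + m ∧ m * q + r = n :=
    ⟨(n - n₀) / m, n₀ + (n - n₀) % m, by omega, by have := Nat.mod_lt (n - n₀) hm; omega,
      by have := Nat.div_add_mod (n - n₀) m; omega⟩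
  have hbr : 1 ≤ b r := hn₀ r hr₀
  calc (c ^ (n₀ + m))⁻¹ * c ^ n ≤ (c ^ r)⁻¹ * c ^ n := by gcongr
    _ = (c ^ m) ^ q := by
        rw [← hdecomp, pow_add c (m * q) r, pow_mul, mul_comm,
          mul_inv_cancel_right₀ (by positivity)]
    _ ≤ (b m : ℝ) ^ q := by gcongr
    _ ≤ ((b m ^ q * b r : ℕ) : ℝ) := by
        push_cast
        exact le_mul_of_one_le_right (by positivity) (by exact_mod_cast hbr)
    _ ≤ b n := by
        rw [← hdecomp]
        exact_mod_cast h.pow_mul_le hp m q r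

theorem eventually_const_mul_pow_le (h : IsCompositionCount p b) (hp : ∀ m, m < p m) {α : ℝ}
    (hα : 0 ≤ α) (hG : HasSum (fun m => α ^ p (m + 1)) 1) (hpos : ∀ᶠ n in atTop, 0 < b n)
    {c : ℝ} (hc : 1 ≤ c) (hcα : c * α < 1) : ∃ C > 0, ∀ᶠ n in atTop, C * c ^ n ≤ b n := by
  have hc₀ : 0 < c := zero_lt_one.trans_le hc
  obtain ⟨γ, hαγ, hγc⟩ := exists_between ((lt_div_iff₀' hc₀).2 hcα)
  obtain ⟨N, hN⟩ := exists_one_lt_sum_range_pow ((Nat.zero_le _).trans_lt (hp 1)).ne' hα hαγ hG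
  obtain ⟨m, hm, hbm⟩ := h.exists_pow_le hp (hα.trans hαγ.le) ((lt_div_iff₀' hc₀).1 hγc) hN
  exact h.exists_const_mul_pow_le hp hc hm hbm hpos

end IsCompositionCount

theorem eventually_mem_closure_range {d : ℕ} (hd : 2 ≤ d) :
    ∀ᶠ n in atTop, n ∈ AddSubmonoid.closure (Set.range fun m => (d - 1) * (m + 1) ^ 2 + 1) := by
  set c := (d - 1) * d ^ 2 + 1
  have hcop : Nat.Coprime d c := by
    have hc : c = 1 + d * ((d - 1) * d) := by ring
    rw [hc, Nat.coprime_add_mul_left_right]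
    exact Nat.coprime_one_right d
  have hc : 1 < c := by
    have : 0 < (d - 1) * d ^ 2 := Nat.mul_pos (by omega) (by positivity)
    omega
  have hpair : ({d, c} : Set ℕ) ⊆ Set.range fun m => (d - 1) * (m + 1) ^ 2 + 1 := by
    rintro _ (rfl | rfl)
    · exact ⟨0, by simp; omega⟩
    · exact ⟨d - 1, by simp [c, Nat.sub_add_cancel (by omega : 1 ≤ d)]⟩
  filter_upwards [eventually_gt_atTop (d * c - d - c)] with n hn
  exact AddSubmonoid.closure_mono hpair
    ((frobeniusNumber_iff.1 (frobeniusNumber_pair hcop (by omega) hc)).2 n hn)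

theorem stmt15 (d : ℕ) (hd : 2 ≤ d) (b : ℕ → ℕ) (hb0 : b 0 = 1)
    (hb : ∀ n, 1 ≤ n → b n = ∑ m ∈ Finset.Icc 1 n,
        if (d - 1) * m ^ 2 + 1 ≤ n then b (n - ((d - 1) * m ^ 2 + 1)) else 0)
    (α : ℝ) (hα : α ∈ Set.Ioo (0 : ℝ) 1)
    (hα1 : ∑' m : ℕ, α ^ ((d - 1) * (m + 1) ^ 2 + 1) = 1) :
    Filter.Tendsto (fun n : ℕ => (b n : ℝ) ^ (1 / (n : ℝ))) Filter.atTop (nhds (1 / α)) := by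
  set p : ℕ → ℕ := fun m => (d - 1) * m ^ 2 + 1
  have h : IsCompositionCount p b := ⟨hb0, hb⟩
  have hp : ∀ m, m < p m := fun m => show m < (d - 1) * m ^ 2 + 1 by
    have : m ≤ (d - 1) * m ^ 2 := le_mul_of_one_le_of_le (by omega) (Nat.le_self_pow two_ne_zero m)
    omega
  have hG : HasSum (fun m => α ^ p (m + 1)) 1 := by
    have hs : Summable fun m => α ^ p (m + 1) := by
      by_contra hs
      simp [p, tsum_eq_zero_of_not_summable hs] at hα1
    exact hα1 ▸ hs.hasSum
  have hpos : ∀ᶠ n in atTop, 0 < b n :=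
    (eventually_mem_closure_range hd).mono fun n hn => h.pos_of_mem_closure hp hn
  refine tendsto_rpow_one_div_of_le_pow (fun n => Nat.cast_nonneg _) (fun n => ?_) ?_
  · rw [div_pow, one_pow, le_div_iff₀ (pow_pos hα.1 n)]
    exact h.mul_pow_le_one hp hα.1.le
      (fun N => sum_le_hasSum _ (fun _ _ => pow_nonneg hα.1.le _) hG) n
  · filter_upwards [Ioo_mem_nhdsLT (one_lt_one_div hα.1 hα.2)] with c hc
    exact h.eventually_const_mul_pow_le hp hα.1.le hG hpos hc.1.le ((lt_div_iff₀ hα.1).1 hc.2)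
end

section
/- Let g_n be the number of compositions of n into parts from the set {k! : k ≥ 1} = {1, 2, 6, 24, 120, ...}. Then lim_{n→∞} g_n^{1/n} exists and equals 1/α where α ∈ (0,1) is the unique solution of Σ_{k≥1} t^{k!} = 1. -/
/-!
Concatenation makes the counts supermultiplicative, so by Fekete's lemma `g n ^ (1 / n)` converges
to some `L` with `g n ≤ L ^ n`. The generating function `G t = ∑ g n t ^ n` satisfies
`G = 1 + F G` with `F t = ∑ t ^ (k + 1)!`. Since `F α = 1`, induction gives `g n α ^ n ≤ 1`, hence
`L ≤ 1 / α`, while `G α = ∞`, which rules out `L α < 1`.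
-/

open Filter Topology Finset
open scoped ENNReal Nat

/-- `g n` counts compositions of `n` into parts `f 1, f 2, …`, provided `k ≤ f k` (so that the
indices `k ≤ n` reach every part `≤ n`). -/
def IsCompositionCount_s19 (f g : ℕ → ℕ) : Prop :=
  g 0 = 1 ∧ ∀ n, 1 ≤ n → g n = ∑ k ∈ Icc 1 n, if f k ≤ n then g (n - f k) else 0

lemma ENNReal.tsum_ite_le_sub_mul_pow (p : ℕ) (a : ℕ → ℝ≥0∞) (τ : ℝ≥0∞) :
    ∑' n, (if p ≤ n then a (n - p) * τ ^ n else 0) = τ ^ p * ∑' m, a m * τ ^ m := by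
  rw [← ENNReal.summable.sum_add_tsum_nat_add' (k := p),
    sum_eq_zero fun i hi => if_neg (by simpa using hi), zero_add, ← ENNReal.tsum_mul_left]
  refine tsum_congr fun m => ?_
  rw [if_pos (Nat.le_add_left p m), Nat.add_sub_cancel, pow_add]
  ring

namespace IsCompositionCount_s19

variable {f g : ℕ → ℕ} (hg : IsCompositionCount_s19 f g)
include hg

lemma one_le (hf1 : f 1 = 1) (n : ℕ) : 1 ≤ g n := by
  induction n using Nat.strong_induction_on with
  | _ n ih =>
    rcases Nat.eq_zero_or_pos n with rfl | hn
    · exact hg.1.ge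
    · rw [hg.2 n hn]
      calc 1 ≤ g (n - f 1) := ih _ (by omega)
        _ = if f 1 ≤ n then g (n - f 1) else 0 := by rw [if_pos (by omega)]
        _ ≤ _ := single_le_sum (f := fun k => if f k ≤ n then g (n - f k) else 0)
              (fun _ _ => Nat.zero_le _) (mem_Icc.mpr ⟨le_rfl, hn⟩)

lemma mul_le (hf : ∀ k, k ≤ f k) (m n : ℕ) : g m * g n ≤ g (m + n) := by
  induction n using Nat.strong_induction_on with
  | _ n ih =>
    rcases Nat.eq_zero_or_pos n with rfl | hn
    · simp [hg.1]
    rw [hg.2 n hn, hg.2 (m + n) (by omega), mul_sum]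
    calc ∑ k ∈ Icc 1 n, g m * (if f k ≤ n then g (n - f k) else 0)
        ≤ ∑ k ∈ Icc 1 n, if f k ≤ m + n then g (m + n - f k) else 0 := by
          refine sum_le_sum fun k hk => ?_
          have hk1 := (mem_Icc.mp hk).1
          split_ifs with hkn hkmn
          · rw [show m + n - f k = m + (n - f k) by omega]
            exact ih _ (by have := hf k; omega)
          · omega
          all_goals simp
      _ ≤ _ := sum_le_sum_of_subset_of_nonneg (Icc_subset_Icc_right (by omega))
          fun _ _ _ => Nat.zero_le _

lemma natCast_eq_tsum (hf : ∀ k, k ≤ f k) (n : ℕ) :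
    (g n : ℝ≥0∞) = (if n = 0 then 1 else 0) +
      ∑' k, if f (k + 1) ≤ n then (g (n - f (k + 1)) : ℝ≥0∞) else 0 := by
  have hvanish : ∀ k, n ≤ k → ¬ f (k + 1) ≤ n := fun k hk => by have := hf (k + 1); omega
  rw [tsum_eq_sum (s := range n) fun k hk => if_neg (hvanish k (by simpa using hk))]
  rcases Nat.eq_zero_or_pos n with rfl | hn
  · simp [hg.1]
  rw [if_neg hn.ne', zero_add, hg.2 n hn, Nat.cast_sum, ← Ico_add_one_right_eq_Icc,
    sum_Ico_eq_sum_range, Nat.add_sub_cancel]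
  exact sum_congr rfl fun k _ => by rw [add_comm 1 k]; split_ifs <;> simp

lemma tsum_mul_pow_eq (hf : ∀ k, k ≤ f k) (τ : ℝ≥0∞) :
    ∑' n, (g n : ℝ≥0∞) * τ ^ n =
      1 + (∑' k, τ ^ f (k + 1)) * ∑' n, (g n : ℝ≥0∞) * τ ^ n := by
  calc ∑' n, (g n : ℝ≥0∞) * τ ^ n
      = ∑' n, ((if n = 0 then 1 else 0) * τ ^ n + ∑' k,
          if f (k + 1) ≤ n then (g (n - f (k + 1)) : ℝ≥0∞) * τ ^ n else 0) := by
        refine tsum_congr fun n => ?_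
        rw [hg.natCast_eq_tsum hf, add_mul, ← ENNReal.tsum_mul_right]
        simp only [ite_mul, zero_mul]
    _ = 1 + ∑' k, τ ^ f (k + 1) * ∑' n, (g n : ℝ≥0∞) * τ ^ n := by
        rw [ENNReal.tsum_add, ENNReal.tsum_comm]
        simp only [ite_mul, one_mul, zero_mul, tsum_ite_eq, pow_zero]
        exact congrArg _ (tsum_congr fun k =>
          ENNReal.tsum_ite_le_sub_mul_pow (f (k + 1)) (fun m => g m) τ)
    _ = _ := by rw [ENNReal.tsum_mul_right]

lemma mul_pow_le_one_s19 (hf : ∀ k, k ≤ f k) {τ : ℝ≥0∞} (hτ : ∑' k, τ ^ f (k + 1) ≤ 1)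
    (n : ℕ) : (g n : ℝ≥0∞) * τ ^ n ≤ 1 := by
  induction n using Nat.strong_induction_on with
  | _ n ih =>
    rcases Nat.eq_zero_or_pos n with rfl | hn
    · simp [hg.1]
    rw [hg.natCast_eq_tsum hf, if_neg hn.ne', zero_add, ← ENNReal.tsum_mul_right]
    refine le_trans (ENNReal.tsum_le_tsum fun k => ?_) hτ
    split_ifs with hkn
    · have hp := hf (k + 1)
      calc (g (n - f (k + 1)) : ℝ≥0∞) * τ ^ n
          = (g (n - f (k + 1)) * τ ^ (n - f (k + 1))) * τ ^ f (k + 1) := by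
            rw [mul_assoc, ← pow_add, Nat.sub_add_cancel hkn]
        _ ≤ 1 * τ ^ f (k + 1) := by gcongr; exact ih _ (by omega)
        _ = τ ^ f (k + 1) := one_mul _
    · simp

lemma tsum_mul_pow_eq_top (hf : ∀ k, k ≤ f k) {τ : ℝ≥0∞} (hτ : 1 ≤ ∑' k, τ ^ f (k + 1)) :
    ∑' n, (g n : ℝ≥0∞) * τ ^ n = ∞ := by
  set S := ∑' n, (g n : ℝ≥0∞) * τ ^ n
  by_contra hS
  have : S + 1 ≤ S := calc
    S + 1 = 1 + 1 * S := by rw [one_mul, add_comm]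
    _ ≤ 1 + (∑' k, τ ^ f (k + 1)) * S := by gcongr
    _ = S := (hg.tsum_mul_pow_eq hf τ).symm
  exact (ENNReal.lt_add_right hS one_ne_zero).not_ge this

end IsCompositionCount_s19

lemma exists_tendsto_rpow_one_div_of_supermultiplicative {a : ℕ → ℝ} {C : ℝ}
    (ha : ∀ n, 0 < a n) (hmul : ∀ m n, a m * a n ≤ a (m + n)) (hC : ∀ n, a n ≤ C ^ n) :
    ∃ L, 0 < L ∧ L ≤ C ∧ Tendsto (fun n : ℕ => a n ^ (1 / (n : ℝ))) atTop (𝓝 L) ∧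
      ∀ n, a n ≤ L ^ n := by
  have hsub : Subadditive fun n => -Real.log (a n) := fun m n => by
    have := Real.log_le_log (mul_pos (ha m) (ha n)) (hmul m n)
    rw [Real.log_mul (ha m).ne' (ha n).ne'] at this
    linarith
  have hlower : ∀ n : ℕ, n ≠ 0 → -Real.log C ≤ -Real.log (a n) / n := fun n hn => by
    have := Real.log_le_log (ha n) (hC n)
    rw [Real.log_pow] at this
    rw [le_div_iff₀ (by positivity)]
    linarith
  have hbdd : BddBelow (Set.range fun n : ℕ => -Real.log (a n) / n) := by
    refine ⟨min (-Real.log C) 0, ?_⟩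
    rintro _ ⟨n, rfl⟩
    rcases eq_or_ne n 0 with rfl | hn
    · simp
    · exact (min_le_left _ _).trans (hlower n hn)
  have hlim := hsub.tendsto_lim hbdd
  have hC0 : 0 < C := (ha 1).trans_le (by simpa using hC 1)
  refine ⟨Real.exp (-hsub.lim), Real.exp_pos _, ?_, ?_, fun n => ?_⟩
  · have : -Real.log C ≤ hsub.lim :=
      ge_of_tendsto hlim (eventually_atTop.2 ⟨1, fun n hn => hlower n (by omega)⟩)
    calc Real.exp (-hsub.lim) ≤ Real.exp (Real.log C) := Real.exp_le_exp.2 (by linarith)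
      _ = C := Real.exp_log hC0
  · refine hlim.neg.rexp.congr fun n => ?_
    rw [Real.rpow_def_of_pos (ha n)]
    ring_nf
  · rcases eq_or_ne n 0 with rfl | hn
    · have := hmul 0 0
      rw [add_zero] at this
      simpa using (mul_le_iff_le_one_left (ha 0)).1 this
    have := hsub.lim_le_div hbdd hn
    rw [le_div_iff₀ (by positivity)] at this
    calc a n = Real.exp (Real.log (a n)) := (Real.exp_log (ha n)).symm
      _ ≤ Real.exp (n * -hsub.lim) := Real.exp_le_exp.2 (by linarith)
      _ = Real.exp (-hsub.lim) ^ n := Real.exp_nat_mul _ n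

theorem stmt19 (g : ℕ → ℕ) (hg0 : g 0 = 1)
    (hg : ∀ n, 1 ≤ n → g n = ∑ k ∈ Finset.Icc 1 n,
        if Nat.factorial k ≤ n then g (n - Nat.factorial k) else 0)
    (α : ℝ) (hα : α ∈ Set.Ioo (0 : ℝ) 1)
    (hα1 : ∑' k : ℕ, α ^ Nat.factorial (k + 1) = 1) :
    Filter.Tendsto (fun n : ℕ => (g n : ℝ) ^ (1 / (n : ℝ))) Filter.atTop (nhds (1 / α)) := by
  have hcount : IsCompositionCount_s19 Nat.factorial g := ⟨hg0, hg⟩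
  have hf : ∀ k, k ≤ k ! := Nat.self_le_factorial
  have hα0 : 0 < α := hα.1
  have hcast : ∀ n (x : ℝ), 0 ≤ x →
      (g n : ℝ≥0∞) * ENNReal.ofReal x ^ n = ENNReal.ofReal (g n * x ^ n) := fun n x hx => by
    rw [ENNReal.ofReal_mul (by positivity), ENNReal.ofReal_pow hx, ENNReal.ofReal_natCast]
  have hτ : ∑' k, ENNReal.ofReal α ^ (k + 1)! = 1 := by
    have hsum : Summable fun k => α ^ (k + 1)! := by
      by_contra h
      exact zero_ne_one ((tsum_eq_zero_of_not_summable h).symm.trans hα1)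
    rw [← ENNReal.ofReal_one, ← hα1, ENNReal.ofReal_tsum_of_nonneg (fun _ => by positivity) hsum]
    simp_rw [ENNReal.ofReal_pow hα0.le]
  have hbound : ∀ n, (g n : ℝ) ≤ (1 / α) ^ n := fun n => by
    have := hcount.mul_pow_le_one_s19 hf hτ.le n
    rw [hcast n α hα0.le, ENNReal.ofReal_le_one] at this
    rwa [div_pow, one_pow, le_div_iff₀ (by positivity)]
  obtain ⟨L, hL0, hLα, hlim, hgL⟩ := exists_tendsto_rpow_one_div_of_supermultiplicative
    (fun n => by exact_mod_cast hcount.one_le Nat.factorial_one n)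
    (fun m n => by exact_mod_cast hcount.mul_le hf m n) hbound
  suffices 1 / α ≤ L by rwa [le_antisymm hLα this] at hlim
  by_contra! hL
  have hfinite : ∑' n, (g n : ℝ≥0∞) * ENNReal.ofReal α ^ n < ∞ := calc
    _ ≤ ∑' n, ENNReal.ofReal (L * α) ^ n := ENNReal.tsum_le_tsum fun n => by
        rw [hcast n α hα0.le, ← ENNReal.ofReal_pow (by positivity), mul_pow]
        exact ENNReal.ofReal_le_ofReal (by gcongr; exact hgL n)
    _ < ∞ := tsum_geometric_lt_top.2 (ENNReal.ofReal_lt_one.2 (by rwa [lt_div_iff₀ hα0] at hL))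
  exact hfinite.ne (hcount.tsum_mul_pow_eq_top hf hτ.ge)
end
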